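/- arXiv:1612.02531 — 2 statements merged into one kernel-verified Lean document; each statement's English description precedes it below -/
import Mathlib

section
/- Let G be a graph with arboricity at most α whose edges are linearly ordered, and let E_α be the set of edges uv such that at most α edges incident to u and at most α edges incident to v appear after uv in the order. Then |E_α| ≤ (α+2)·ν(G), where ν(G) is the maximum matching size. -/
/-- `G` has arboricity at most `α`: the edge set can be partitioned into at
most `α` forests. -/
def ArboricityLE {V : Type*} (G : SimpleGraph V) (α : ℕ) : Prop :=
  ∃ F : Fin α → SimpleGraph V,
    (∀ i, (F i).IsAcyclic) ∧ (∀ i, F i ≤ G) ∧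
    (∀ ⦃u v : V⦄, G.Adj u v → ∃! i, (F i).Adj u v)

/-- Maximum size of a matching of `G` (a set of pairwise vertex-disjoint edges). -/
noncomputable def matchNum {V : Type*} (G : SimpleGraph V) : ℕ :=
  sSup {n : ℕ | ∃ M : Set (Sym2 V), M ⊆ G.edgeSet ∧
    (M.Pairwise fun e f => ∀ v : V, v ∈ e → v ∉ f) ∧ M.ncard = n}

/-!
Every vertex `v` meets at most `α + 1` edges of `E_α`: the others all arrive after the
earliest one, `e`, and `e ∈ E_α` allows at most `α` such edges. So it suffices that a loopless
graph of maximum degree `D` has at most `(D + 1) ν` edges, proved by induction on the number of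
edges. If some vertex is covered by every maximum matching, deleting its at most `D` edges
lowers `ν`. Otherwise, by Gallai's lemma, a maximum matching `M` covers every vertex of the
component of an `M`-exposed vertex `u` except `u`; so this component has `2k + 1` vertices,
contains `k` edges of `M`, and its degrees are at most `min D (2k)`, whence at most `(D + 1) k`
edges; the other components are handled by induction. Gallai's lemma itself comes from switching
maximum matchings along alternating paths.
-/

open Finset Relation

lemma Nat.le_succ_mul_of_two_mul_le {D k r s : ℕ} (hr : r ≤ 2 * k + 1) (hD : 2 * s ≤ r * D)
    (hr' : 2 * s ≤ r * (r - 1)) : s ≤ (D + 1) * k := by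
  rcases le_or_gt D (2 * k) with hDk | hDk
  · nlinarith [Nat.mul_le_mul_right D hr]
  · nlinarith [Nat.mul_le_mul hr (show r - 1 ≤ 2 * k by omega)]

namespace Finset

variable {V : Type*}

def IsMatching (M : Finset (Sym2 V)) : Prop :=
  (M : Set (Sym2 V)).Pairwise fun e f => ∀ v ∈ e, v ∉ f

structure IsMaxMatchingIn (M S : Finset (Sym2 V)) : Prop where
  subset : M ⊆ S
  isMatching : M.IsMatching
  card_le : ∀ P ⊆ S, P.IsMatching → #P ≤ #M

variable {M N K S : Finset (Sym2 V)}

lemma IsMatching.mono (hN : N.IsMatching) (h : M ⊆ N) : M.IsMatching :=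
  Set.Pairwise.mono (coe_subset.2 h) hN

lemma IsMatching.eq_of_mem (hM : M.IsMatching) {e f : Sym2 V} {v : V} (he : e ∈ M) (hf : f ∈ M)
    (hve : v ∈ e) (hvf : v ∈ f) : e = f := by
  by_contra hne
  exact hM he hf hne v hve hvf

lemma exists_isMaxMatchingIn (S : Finset (Sym2 V)) :
    ∃ M : Finset (Sym2 V), M.IsMaxMatchingIn S := by
  classical
  obtain ⟨M, hM, hmax⟩ := exists_max_image {P ∈ S.powerset | P.IsMatching} card
    ⟨∅, mem_filter.2 ⟨empty_mem_powerset _, by simp [IsMatching]⟩⟩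
  simp only [mem_filter, mem_powerset] at hM hmax
  exact ⟨M, hM.1, hM.2, fun P hPS hP => hmax P ⟨hPS, hP⟩⟩

lemma IsMaxMatchingIn.of_card_le (hM : M.IsMaxMatchingIn S) (hNS : N ⊆ S) (hN : N.IsMatching)
    (h : #M ≤ #N) : N.IsMaxMatchingIn S :=
  ⟨hNS, hN, fun P hPS hP => (hM.card_le P hPS hP).trans h⟩

lemma reflTransGen_of_mem {e : Sym2 V} (he : e ∈ S) {a b : V} (ha : a ∈ e) (hb : b ∈ e) :
    ReflTransGen (fun a b => s(a, b) ∈ S) a b := by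
  obtain ⟨c, rfl⟩ := Sym2.mem_iff_exists.1 ha
  rcases Sym2.mem_iff.1 hb with rfl | rfl
  · exact ReflTransGen.refl
  · exact ReflTransGen.single he

variable [DecidableEq V]

def verts (M : Finset (Sym2 V)) : Finset V := M.biUnion Sym2.toFinset

@[simp]
lemma mem_verts {v : V} : v ∈ M.verts ↔ ∃ e ∈ M, v ∈ e := by
  simp [verts]

lemma card_verts_le (M : Finset (Sym2 V)) : #M.verts ≤ 2 * #M :=
  calc #M.verts ≤ ∑ e ∈ M, #e.toFinset := card_biUnion_le
    _ ≤ ∑ _e ∈ M, 2 := sum_le_sum fun e _ => by rw [Sym2.card_toFinset]; split_ifs <;> omega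
    _ = 2 * #M := by rw [sum_const, smul_eq_mul, mul_comm]

lemma IsMatching.insert_of_notMem_verts {e : Sym2 V} (hM : M.IsMatching)
    (he : ∀ v ∈ e, v ∉ M.verts) :
    (insert e M).IsMatching := by
  rw [IsMatching, coe_insert]
  exact Set.Pairwise.insert hM fun f hf _ => ⟨fun v hve hvf => he v hve (mem_verts.2 ⟨f, hf, hvf⟩),
    fun v hvf hve => he v hve (mem_verts.2 ⟨f, hf, hvf⟩)⟩

lemma IsMatching.union (hM : M.IsMatching) (hN : N.IsMatching) (h : Disjoint M.verts N.verts) :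
    (M ∪ N).IsMatching := by
  rw [IsMatching, coe_union, Set.pairwise_union]
  refine ⟨hM, hN, fun e he f hf _ => ⟨fun v hve hvf => ?_, fun v hvf hve => ?_⟩⟩ <;>
    exact disjoint_left.1 h (mem_verts.2 ⟨e, he, hve⟩) (mem_verts.2 ⟨f, hf, hvf⟩)

lemma disjoint_of_disjoint_verts (h : Disjoint M.verts N.verts) : Disjoint M N := by
  refine disjoint_left.2 fun e heM heN => ?_
  induction e using Sym2.ind with
  | _ a b =>
    exact disjoint_left.1 h (mem_verts.2 ⟨_, heM, Sym2.mem_mk_left a b⟩)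
      (mem_verts.2 ⟨_, heN, Sym2.mem_mk_left a b⟩)

lemma IsMaxMatchingIn.mem_verts_or_mem_verts (hM : M.IsMaxMatchingIn S) {a b : V}
    (hab : s(a, b) ∈ S) : a ∈ M.verts ∨ b ∈ M.verts := by
  by_contra! h
  have hfree : ∀ v ∈ s(a, b), v ∉ M.verts := by simpa [Sym2.mem_iff] using h
  have hnotin : s(a, b) ∉ M := fun habM => h.1 (mem_verts.2 ⟨_, habM, Sym2.mem_mk_left a b⟩)
  have := hM.card_le _ (insert_subset hab hM.subset) (hM.isMatching.insert_of_notMem_verts hfree)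
  rw [card_insert_of_notMem hnotin] at this
  omega

lemma IsMaxMatchingIn.card_add_card_le (hM : M.IsMaxMatchingIn S) (hKS : K ⊆ S) (hK : K.IsMatching)
    (hNS : N ⊆ S) (hN : N.IsMatching) (h : Disjoint K.verts N.verts) : #K + #N ≤ #M := by
  rw [← card_union_of_disjoint (disjoint_of_disjoint_verts h)]
  exact hM.card_le _ (union_subset hKS hNS) (hK.union hN h)

lemma IsMatching.shift (hK : K.IsMatching) {a b c : V} (hab : s(a, b) ∈ K) (hc : c ∉ K.verts) :
    (insert s(b, c) (K.erase s(a, b))).IsMatching := by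
  refine (hK.mono (erase_subset _ _)).insert_of_notMem_verts fun v hv hvK => ?_
  obtain ⟨f, hf, hvf⟩ := mem_verts.1 hvK
  rcases Sym2.mem_iff.1 hv with rfl | rfl
  · exact (mem_erase.1 hf).1 (hK.eq_of_mem (mem_of_mem_erase hf) hab hvf (Sym2.mem_mk_right a v))
  · exact hc (mem_verts.2 ⟨f, mem_of_mem_erase hf, hvf⟩)

lemma IsMatching.mem_verts_shift (hK : K.IsMatching) {a b c x : V} (hab : s(a, b) ∈ K)
    (hne : a ≠ b) :
    x ∈ (insert s(b, c) (K.erase s(a, b))).verts ↔ x ∈ K.verts ∧ x ≠ a ∨ x = c := by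
  simp only [mem_verts, mem_insert, mem_erase, exists_eq_or_imp, Sym2.mem_iff]
  constructor
  · rintro ((rfl | rfl) | ⟨f, ⟨hfab, hfK⟩, hxf⟩)
    · exact Or.inl ⟨⟨_, hab, Sym2.mem_mk_right a x⟩, hne.symm⟩
    · exact Or.inr rfl
    · refine Or.inl ⟨⟨f, hfK, hxf⟩, ?_⟩
      rintro rfl
      exact hfab (hK.eq_of_mem hfK hab hxf (Sym2.mem_mk_left x b))
  · rintro (⟨⟨f, hfK, hxf⟩, hxa⟩ | rfl)
    · by_cases hfab : f = s(a, b)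
      · subst hfab
        exact Or.inl (Or.inl ((Sym2.mem_iff.1 hxf).resolve_left hxa))
      · exact Or.inr ⟨f, ⟨hfab, hfK⟩, hxf⟩
    · exact Or.inl (Or.inr rfl)

lemma IsMaxMatchingIn.shift (hK : K.IsMaxMatchingIn S) {a b c : V} (hab : s(a, b) ∈ K)
    (hbc : s(b, c) ∈ S) (hc : c ∉ K.verts) :
    (insert s(b, c) (K.erase s(a, b))).IsMaxMatchingIn S := by
  refine hK.of_card_le (insert_subset hbc ((erase_subset _ _).trans hK.subset))
    (hK.isMatching.shift hab hc) ?_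
  have hnotin : s(b, c) ∉ K.erase s(a, b) :=
    fun h => hc (mem_verts.2 ⟨_, mem_of_mem_erase h, Sym2.mem_mk_right b c⟩)
  rw [card_insert_of_notMem hnotin, card_erase_add_one hab]

lemma card_insert_erase_sdiff_lt {e f : Sym2 V} (he : e ∈ M) (hf : f ∈ N \ M) :
    #(insert e (N.erase f) \ M) < #(N \ M) := by
  rw [insert_sdiff_of_mem _ he, erase_sdiff_comm]
  exact card_erase_lt_of_mem hf

lemma IsMaxMatchingIn.exists_alternating_start (hM : M.IsMaxMatchingIn S)
    (hN : N.IsMaxMatchingIn S) {z : V} (hzM : z ∈ M.verts) (hzN : z ∉ N.verts) :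
    ∃ z₁ w, s(z, z₁) ∈ M ∧ s(z₁, w) ∈ N \ M ∧ z ≠ z₁ ∧ w ≠ z := by
  obtain ⟨e₁, he₁M, hze₁⟩ := mem_verts.1 hzM
  obtain ⟨z₁, rfl⟩ := Sym2.mem_iff_exists.1 hze₁
  have hz₁N : z₁ ∈ N.verts := (hN.mem_verts_or_mem_verts (hM.subset he₁M)).resolve_left hzN
  obtain ⟨e₂, he₂N, hz₁e₂⟩ := mem_verts.1 hz₁N
  obtain ⟨w, rfl⟩ := Sym2.mem_iff_exists.1 hz₁e₂
  have hzw : z ∉ s(z₁, w) := fun h => hzN (mem_verts.2 ⟨_, he₂N, h⟩)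
  refine ⟨z₁, w, he₁M, mem_sdiff.2 ⟨he₂N, fun he₂M => hzw ?_⟩, fun h => hzN (h ▸ hz₁N),
    fun h => hzw (h ▸ Sym2.mem_mk_right z₁ w)⟩
  rw [hM.isMatching.eq_of_mem he₂M he₁M (Sym2.mem_mk_left z₁ w) (Sym2.mem_mk_right z z₁)]
  exact Sym2.mem_mk_left z z₁

/-- Switching `M` along the `M`/`N`-alternating path that starts at `z` with an edge of `M`;
`y` is the far end of that path. -/
theorem IsMaxMatchingIn.exists_switch {N : Finset (Sym2 V)} (hS : ∀ e ∈ S, ¬e.IsDiag)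
    (hM : M.IsMaxMatchingIn S) (hN : N.IsMaxMatchingIn S) {z : V} (hzM : z ∈ M.verts)
    (hzN : z ∉ N.verts) :
    ∃ M' : Finset (Sym2 V), M' ⊆ M ∪ N ∧ M'.IsMaxMatchingIn S ∧ z ∉ M'.verts ∧
      (∀ x ∈ M.verts, x ≠ z → x ∈ M'.verts) ∧ ∃ y, ∀ x ∈ M'.verts, x ∈ M.verts ∨ x = y := by
  obtain ⟨z₁, w, he₁M, he₂NM, hzz₁, hwz⟩ := hM.exists_alternating_start hN hzM hzN
  have he₂N : s(z₁, w) ∈ N := (mem_sdiff.1 he₂NM).1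
  have he₂S : s(z₁, w) ∈ S := hN.subset he₂N
  by_cases hwM : w ∈ M.verts
  · -- shift `N` onto `s(z, z₁)` so that it exposes `w`, switch `M` recursively from `w`,
    -- then shift the result onto `s(z₁, w)`
    have he₂N' : s(w, z₁) ∈ N := by rwa [Sym2.eq_swap]
    have he₁M' : s(z₁, z) ∈ M := by rwa [Sym2.eq_swap]
    have hwz₁ : w ≠ z₁ := fun h => hS _ he₂S (Sym2.mk_isDiag_iff.2 h.symm)
    set N' := insert s(z₁, z) (N.erase s(w, z₁)) with hN'_def
    have hN' : N'.IsMaxMatchingIn S := hN.shift he₂N' (hM.subset he₁M') hzN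
    have hwN' : w ∉ N'.verts := by
      rw [hN'_def, hN.isMatching.mem_verts_shift he₂N' hwz₁]
      simp [hwz]
    have hN'MN : N' ⊆ M ∪ N :=
      insert_subset (mem_union_left _ he₁M') ((erase_subset _ _).trans subset_union_right)
    have hdec : #(N' \ M) < #(N \ M) :=
      card_insert_erase_sdiff_lt he₁M' (by rwa [Sym2.eq_swap])
    obtain ⟨M₁, hM₁MN, hM₁, hwM₁, hM₁cov, y, hy⟩ := hM.exists_switch hS hN' hwM hwN'
    have he₁M₁ : s(z, z₁) ∈ M₁ := by
      obtain ⟨f, hfM₁, hzf⟩ := mem_verts.1 (hM₁cov z hzM hwz.symm)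
      rcases mem_union.1 (hM₁MN hfM₁) with hfM | hfN'
      · rwa [hM.isMatching.eq_of_mem he₁M hfM (Sym2.mem_mk_left z z₁) hzf]
      · rcases mem_insert.1 hfN' with rfl | hfN
        · rwa [Sym2.eq_swap]
        · exact absurd (mem_verts.2 ⟨f, mem_of_mem_erase hfN, hzf⟩) hzN
    have hverts := fun x => hM₁.isMatching.mem_verts_shift (c := w) (x := x) he₁M₁ hzz₁
    refine ⟨_, insert_subset (mem_union_right _ he₂N) ((erase_subset _ _).trans
      (hM₁MN.trans (union_subset subset_union_left hN'MN))), hM₁.shift he₁M₁ he₂S hwM₁,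
      ?_, fun x hx hxz => ?_, y, fun x hx => ?_⟩
    · simp [hverts, hwz.symm]
    · by_cases hxw : x = w
      · exact (hverts x).2 (Or.inr hxw)
      · exact (hverts x).2 (Or.inl ⟨hM₁cov x hx hxw, hxz⟩)
    · rcases (hverts x).1 hx with ⟨hxM₁, -⟩ | rfl
      · exact hy x hxM₁
      · exact Or.inl hwM
  · have hverts := fun x => hM.isMatching.mem_verts_shift (c := w) (x := x) he₁M hzz₁
    refine ⟨_, insert_subset (mem_union_right _ he₂N) ((erase_subset _ _).trans subset_union_left),
      hM.shift he₁M he₂S hwM, ?_, fun x hx hxz => (hverts x).2 (Or.inl ⟨hx, hxz⟩), w,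
      fun x hx => ((hverts x).1 hx).imp_left And.left⟩
    simp [hverts, hwz.symm]
termination_by #(N \ M)

/-- Gallai's lemma. -/
theorem IsMaxMatchingIn.mem_verts_of_reflTransGen (hS : ∀ e ∈ S, ¬e.IsDiag)
    (havoid : ∀ v, ∃ N : Finset (Sym2 V), N.IsMaxMatchingIn S ∧ v ∉ N.verts)
    (hM : M.IsMaxMatchingIn S) {u w : V} (hu : u ∉ M.verts)
    (huw : ReflTransGen (fun a b => s(a, b) ∈ S) u w) (hne : u ≠ w) : w ∈ M.verts := by
  induction huw using ReflTransGen.head_induction_on generalizing M with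
  | refl => exact absurd rfl hne
  | @head u c huc hcw ih =>
    by_contra hw
    have hcM : c ∈ M.verts := (hM.mem_verts_or_mem_verts huc).resolve_left hu
    obtain ⟨N, hN, hcN⟩ := havoid c
    obtain ⟨M', -, hM', hcM', -, y, hy⟩ := hM.exists_switch hS hN hcM hcN
    by_cases hyu : y = u
    · -- the switch may have covered `u`, but `w` stays exposed and is now closer
      have hcw' : c ≠ w := fun h => hw (h ▸ hcM)
      rcases hy w (ih hM' hcM' hcw') with h | rfl
      · exact hw h
      · exact hne hyu.symm
    · have huM' : u ∉ M'.verts := fun h => (hy u h).elim hu (Ne.symm hyu)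
      exact (hM'.mem_verts_or_mem_verts huc).elim huM' hcM'

section Counting

variable {T : Finset (Sym2 V)} {W : Finset V}

lemma sum_card_filter_mem_eq (hT : ∀ e ∈ T, ¬e.IsDiag) (hTW : ∀ e ∈ T, ∀ v ∈ e, v ∈ W) :
    ∑ v ∈ W, #{e ∈ T | v ∈ e} = 2 * #T := by
  have h := sum_card_bipartiteAbove_eq_sum_card_bipartiteBelow (fun v e => v ∈ e) (s := W) (t := T)
  have hbelow : ∀ e ∈ T, #(bipartiteBelow (fun v e => v ∈ e) W e) = 2 := fun e he => by
    rw [← Sym2.card_toFinset_of_not_isDiag e (hT e he)]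
    congr 1
    ext v
    simpa [bipartiteBelow, Sym2.mem_toFinset] using hTW e he v
  rw [sum_congr rfl hbelow, sum_const, smul_eq_mul, mul_comm] at h
  exact h

lemma two_mul_card_le_card_mul (hT : ∀ e ∈ T, ¬e.IsDiag) (hTW : ∀ e ∈ T, ∀ v ∈ e, v ∈ W)
    {d : ℕ} (hdeg : ∀ v ∈ W, #{e ∈ T | v ∈ e} ≤ d) : 2 * #T ≤ #W * d :=
  calc 2 * #T = ∑ v ∈ W, #{e ∈ T | v ∈ e} := (sum_card_filter_mem_eq hT hTW).symm
    _ ≤ ∑ _v ∈ W, d := sum_le_sum hdeg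
    _ = #W * d := by rw [sum_const, smul_eq_mul]

lemma card_filter_mem_le_card_sub_one (hT : ∀ e ∈ T, ¬e.IsDiag)
    (hTW : ∀ e ∈ T, ∀ v ∈ e, v ∈ W) {v : V} (hv : v ∈ W) : #{e ∈ T | v ∈ e} ≤ #W - 1 := by
  rw [← card_erase_of_mem hv]
  refine (card_le_card fun e he => ?_).trans (card_image_le (f := fun w => s(v, w)))
  obtain ⟨heT, hve⟩ := mem_filter.1 he
  obtain ⟨w, rfl⟩ := Sym2.mem_iff_exists.1 hve
  have hvw : w ≠ v := fun h => hT _ heT (Sym2.mk_isDiag_iff.2 h.symm)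
  exact mem_image_of_mem _ (mem_erase.2 ⟨hvw, hTW _ heT w (Sym2.mem_mk_right v w)⟩)

lemma card_le_succ_mul_card_of_subset_insert_verts (hT : ∀ e ∈ T, ¬e.IsDiag)
    (hTW : ∀ e ∈ T, ∀ v ∈ e, v ∈ W) {D : ℕ} (hdeg : ∀ v, #{e ∈ T | v ∈ e} ≤ D)
    {K : Finset (Sym2 V)} {u : V} (hW : W ⊆ insert u K.verts) : #T ≤ (D + 1) * #K := by
  have hWK : #W ≤ 2 * #K + 1 :=
    (card_le_card hW).trans ((card_insert_le _ _).trans (Nat.add_le_add_right (card_verts_le K) 1))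
  exact Nat.le_succ_mul_of_two_mul_le hWK (two_mul_card_le_card_mul hT hTW fun v _ => hdeg v)
    (two_mul_card_le_card_mul hT hTW fun v hv => card_filter_mem_le_card_sub_one hT hTW hv)

end Counting

lemma IsMaxMatchingIn.card_add_one_le {M' : Finset (Sym2 V)} {v : V} (hM : M.IsMaxMatchingIn S)
    (hv : ∀ N : Finset (Sym2 V), N.IsMaxMatchingIn S → v ∈ N.verts)
    (hM' : M'.IsMaxMatchingIn {e ∈ S | v ∉ e}) : #M' + 1 ≤ #M := by
  by_contra! h
  have hM'S : M'.IsMaxMatchingIn S :=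
    hM.of_card_le (hM'.subset.trans (filter_subset _ _)) hM'.isMatching (by omega)
  obtain ⟨f, hf, hvf⟩ := mem_verts.1 (hv M' hM'S)
  exact (mem_filter.1 (hM'.subset hf)).2 hvf

lemma disjoint_verts_of_forall_mem {P : V → Prop} (hPS : ∀ e ∈ S, ∀ a ∈ e, ∀ b ∈ e, P a → P b)
    (hK : ∀ e ∈ K, ∀ v ∈ e, P v) (hN : ∀ e ∈ N, e ∈ S ∧ ¬∀ v ∈ e, P v) :
    Disjoint K.verts N.verts := by
  refine disjoint_left.2 fun x hxK hxN => ?_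
  obtain ⟨f, hf, hxf⟩ := mem_verts.1 hxK
  obtain ⟨g, hg, hxg⟩ := mem_verts.1 hxN
  obtain ⟨hgS, hgP⟩ := hN g hg
  exact hgP fun v hv => hPS g hgS x hxg v hv (hK f hf x hxf)

open Classical in
lemma IsMaxMatchingIn.card_filter_le_succ_mul_card_filter (hS : ∀ e ∈ S, ¬e.IsDiag) {D : ℕ}
    (hdeg : ∀ v, #{e ∈ S | v ∈ e} ≤ D)
    (havoid : ∀ v, ∃ N : Finset (Sym2 V), N.IsMaxMatchingIn S ∧ v ∉ N.verts)
    (hM : M.IsMaxMatchingIn S) {u : V} (hu : u ∉ M.verts) {P : V → Prop}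
    (hPu : ∀ x, P x → ReflTransGen (fun a b => s(a, b) ∈ S) u x)
    (hPS : ∀ e ∈ S, ∀ a ∈ e, ∀ b ∈ e, P a → P b) :
    #{e ∈ S | ∀ v ∈ e, P v} ≤ (D + 1) * #{e ∈ M | ∀ v ∈ e, P v} := by
  refine card_le_succ_mul_card_of_subset_insert_verts (W := verts {e ∈ S | ∀ v ∈ e, P v}) (u := u)
    (fun e he => hS e (mem_filter.1 he).1) (fun e he v hv => mem_verts.2 ⟨e, he, hv⟩)
    (fun v => (card_le_card (filter_subset_filter _ (filter_subset _ _))).trans (hdeg v))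
    fun x hx => ?_
  obtain ⟨e, he, hxe⟩ := mem_verts.1 hx
  obtain ⟨heS, hPe⟩ := mem_filter.1 he
  rw [mem_insert]
  refine or_iff_not_imp_left.2 fun hxu => ?_
  obtain ⟨f, hf, hxf⟩ := mem_verts.1
    (hM.mem_verts_of_reflTransGen hS havoid hu (hPu x (hPe x hxe)) (Ne.symm hxu))
  exact mem_verts.2 ⟨f, mem_filter.2 ⟨hf, fun v hv => hPS f (hM.subset hf) x hxf v hv (hPe x hxe)⟩,
    hxf⟩

theorem IsMaxMatchingIn.card_le_succ_mul_card {S M : Finset (Sym2 V)} (hS : ∀ e ∈ S, ¬e.IsDiag)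
    {D : ℕ} (hdeg : ∀ v, #{e ∈ S | v ∈ e} ≤ D) (hM : M.IsMaxMatchingIn S) :
    #S ≤ (D + 1) * #M := by
  classical
  have hdeg_filter : ∀ (p : Sym2 V → Prop) [DecidablePred p] v, #{e ∈ S.filter p | v ∈ e} ≤ D :=
    fun p _ v => (card_le_card (filter_subset_filter _ (filter_subset _ _))).trans (hdeg v)
  by_cases hess : ∃ v, ∀ N : Finset (Sym2 V), N.IsMaxMatchingIn S → v ∈ N.verts
  · obtain ⟨v, hv⟩ := hess
    obtain ⟨M', hM'⟩ := exists_isMaxMatchingIn {e ∈ S | v ∉ e}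
    obtain ⟨e, he, hve⟩ := mem_verts.1 (hv M hM)
    have hlt : #{e ∈ S | v ∉ e} < #S :=
      card_lt_card (filter_ssubset.2 ⟨e, hM.subset he, not_not.2 hve⟩)
    have ih := hM'.card_le_succ_mul_card (fun e he => hS e (mem_filter.1 he).1)
      (hdeg_filter _)
    have hdrop := hM.card_add_one_le hv hM'
    have hsplit := card_filter_add_card_filter_not (s := S) (v ∈ ·)
    nlinarith [hdeg v]
  push Not at hess
  by_cases hcov : ∀ e ∈ S, ∀ v ∈ e, v ∈ M.verts
  · nlinarith [two_mul_card_le_card_mul hS hcov fun v _ => hdeg v, card_verts_le M]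
  push Not at hcov
  obtain ⟨e₀, he₀, u, hue₀, hu⟩ := hcov
  set P := ReflTransGen (fun a b => s(a, b) ∈ S) u
  have hPS : ∀ e ∈ S, ∀ a ∈ e, ∀ b ∈ e, P a → P b :=
    fun e he a ha b hb hPa => hPa.trans (reflTransGen_of_mem he ha hb)
  set S₂ := {e ∈ S | ¬∀ v ∈ e, P v}
  obtain ⟨M₂, hM₂⟩ := exists_isMaxMatchingIn S₂
  have hlt : #S₂ < #S := card_lt_card (filter_ssubset.2 ⟨e₀, he₀, not_not.2 fun v hv =>
    hPS e₀ he₀ u hue₀ v hv ReflTransGen.refl⟩)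
  have ih := hM₂.card_le_succ_mul_card (fun e he => hS e (mem_filter.1 he).1) (hdeg_filter _)
  have h₁ := hM.card_filter_le_succ_mul_card_filter hS hdeg hess hu (fun _ h => h) hPS
  have hunion := hM.card_add_card_le (K := {e ∈ M | ∀ v ∈ e, P v})
    ((filter_subset _ _).trans hM.subset) (hM.isMatching.mono (filter_subset _ _))
    (hM₂.subset.trans (filter_subset _ _)) hM₂.isMatching
    (disjoint_verts_of_forall_mem hPS (fun e he => (mem_filter.1 he).2)
      fun e he => mem_filter.1 (hM₂.subset he))
  have hsplit := card_filter_add_card_filter_not (s := S) (fun e => ∀ v ∈ e, P v)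
  nlinarith
termination_by #S

lemma card_le_succ_of_card_filter_lt_le {ι : Type*} {A : Finset ι} {t : ι → ℕ}
    (ht : Set.InjOn t A) {α : ℕ} (h : ∀ e ∈ A, #{e' ∈ A | t e < t e'} ≤ α) : #A ≤ α + 1 := by
  classical
  obtain rfl | hA := A.eq_empty_or_nonempty
  · simp
  obtain ⟨e₀, he₀, hmin⟩ := exists_min_image A t hA
  have hsub : A.erase e₀ ⊆ {e' ∈ A | t e₀ < t e'} := fun f hf => by
    obtain ⟨hfe₀, hfA⟩ := mem_erase.1 hf
    exact mem_filter.2 ⟨hfA, (hmin f hfA).lt_of_ne fun h => hfe₀ (ht hfA he₀ h.symm)⟩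
  rw [← card_erase_add_one he₀]
  exact Nat.add_le_add_right ((card_le_card hsub).trans (h e₀ he₀)) 1

end Finset

open Finset

lemma card_le_matchNum {V : Type*} [Finite V] {G : SimpleGraph V} {M : Finset (Sym2 V)}
    (hM : M.IsMatching) (hMG : ∀ e ∈ M, e ∈ G.edgeSet) : #M ≤ matchNum G := by
  refine le_csSup ⟨G.edgeSet.ncard, ?_⟩ ⟨M, fun e he => hMG e he, hM, Set.ncard_coe_finset M⟩
  rintro n ⟨N, hNG, -, rfl⟩
  exact Set.ncard_le_ncard hNG (Set.toFinite _)

theorem stmt_3_general {V : Type*} [Fintype V] (G : SimpleGraph V) (α : ℕ)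
    (t : Sym2 V → ℕ) (ht : Set.InjOn t G.edgeSet) :
    {e ∈ G.edgeSet |
        ∀ u ∈ e, {e' ∈ G.edgeSet | u ∈ e' ∧ t e < t e'}.ncard ≤ α}.ncard ≤
      (α + 2) * matchNum G := by
  classical
  set E := {e ∈ G.edgeSet | ∀ u ∈ e, {e' ∈ G.edgeSet | u ∈ e' ∧ t e < t e'}.ncard ≤ α}
  have hEG : ∀ e ∈ E.toFinset, e ∈ G.edgeSet := fun e he => (Set.mem_toFinset.1 he).1
  have hdeg : ∀ v, #{e ∈ E.toFinset | v ∈ e} ≤ α + 1 := fun v =>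
    card_le_succ_of_card_filter_lt_le (ht.mono fun e he => hEG e (mem_filter.1 he).1)
      fun e he => by
        obtain ⟨heE, hve⟩ := mem_filter.1 he
        refine le_trans ?_ ((Set.mem_toFinset.1 heE).2 v hve)
        rw [← Set.ncard_coe_finset]
        refine Set.ncard_le_ncard (fun f hf => ?_) (Set.toFinite _)
        obtain ⟨hfA, htf⟩ := mem_filter.1 hf
        exact ⟨hEG f (mem_filter.1 hfA).1, (mem_filter.1 hfA).2, htf⟩
  obtain ⟨M, hM⟩ := exists_isMaxMatchingIn E.toFinset
  calc E.ncard = #E.toFinset := Set.ncard_eq_toFinset_card' E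
    _ ≤ (α + 1 + 1) * #M :=
      hM.card_le_succ_mul_card (fun e he => G.not_isDiag_of_mem_edgeSet (hEG e he)) hdeg
    _ ≤ (α + 2) * matchNum G :=
      Nat.mul_le_mul_left _ (card_le_matchNum hM.isMatching fun e he => hEG e (hM.subset he))

/-- Let `G` have arboricity at most `α` with edges linearly ordered by arrival
times `t` (distinct on edges), and let `E_α` be the set of edges `e` such that
for each endpoint `u` of `e` at most `α` edges incident to `u` arrive after
`e`.  Then `|E_α| ≤ (α+2)·ν(G)`. -/
theorem stmt_3 {V : Type*} [Fintype V] (G : SimpleGraph V) (α : ℕ)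
    (hG : ArboricityLE G α)
    (t : Sym2 V → ℕ) (ht : Set.InjOn t G.edgeSet) :
    {e ∈ G.edgeSet |
        ∀ u ∈ e, {e' ∈ G.edgeSet | u ∈ e' ∧ t e < t e'}.ncard ≤ α}.ncard ≤
      (α + 2) * matchNum G :=
  stmt_3_general G α t ht
end

section
/- If y : E(G) → ℝ≥0 is a fractional matching (for every vertex v, the sum of y over edges incident to v is at most 1) with y_e ≤ ε for all edges e, then Σ_e y_e ≤ (1+ε)·ν(G), where ν(G) is the maximum integral matching size. -/
/-!
Induction on the number of edges. If some vertex `t` is covered by every maximum matching, deleting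
the edges at `t` lowers `ν` by one and the total weight by at most one. Otherwise every vertex is
missed by some maximum matching, and then, by Gallai's lemma, a maximum matching `M` misses at most
one vertex of each connected component. Count the weight at the vertices: on a component with `s`
vertices each vertex carries weight at most `1` and at most `ε (s - 1)`, so the component carries
at most `min(s, ε s (s - 1)) ≤ (1 + ε)(s - 1)`. As at least `s - 1` of its vertices are covered by
`M`, summing over the components gives `2 ∑ y ≤ (1 + ε) · 2ν`.
-/

open Finset

lemma Finset.sum_le_one_add_mul_of_card_le {ι : Type*} {S : Finset ι} {w : ι → ℝ} {ε : ℝ} {m : ℕ}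
    (hε : 0 ≤ ε) (hw1 : ∀ i ∈ S, w i ≤ 1) (hwε : ∀ i ∈ S, w i ≤ ε * ((#S : ℝ) - 1))
    (hm : #S ≤ m + 1) : ∑ i ∈ S, w i ≤ (1 + ε) * m := by
  have hx1 : ∑ i ∈ S, w i ≤ #S := by simpa using Finset.sum_le_card_nsmul S w 1 hw1
  have hm0 : (0 : ℝ) ≤ m := m.cast_nonneg
  rcases hm.lt_or_eq with hs | hs
  · have hsm : (#S : ℝ) ≤ m := by exact_mod_cast Nat.lt_succ_iff.1 hs
    nlinarith
  have hx2 : ∑ i ∈ S, w i ≤ #S * (ε * m) := by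
    simpa [hs] using Finset.sum_le_card_nsmul S w _ hwε
  rw [hs, Nat.cast_succ] at hx1 hx2
  rcases le_or_gt 1 (ε * m) with hbig | hsmall
  · linarith
  · nlinarith [mul_le_mul_of_nonneg_left hsmall.le hm0]

namespace SimpleGraph

variable {V : Type*}

def IsEdgeMatching (H : SimpleGraph V) (M : Set (Sym2 V)) : Prop :=
  M ⊆ H.edgeSet ∧ M.Pairwise fun e f => ∀ v : V, v ∈ e → v ∉ f

def IsMaximumEdgeMatching (H : SimpleGraph V) (M : Set (Sym2 V)) : Prop :=
  H.IsEdgeMatching M ∧ M.ncard = matchNum H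

def coveredVerts (M : Set (Sym2 V)) : Set V := {v | ∃ e ∈ M, v ∈ e}

section Matching

variable {H : SimpleGraph V} {M N : Set (Sym2 V)} {e f : Sym2 V} {t u v x : V}

namespace IsEdgeMatching

lemma subset (hM : H.IsEdgeMatching M) (h : N ⊆ M) : H.IsEdgeMatching N :=
  ⟨h.trans hM.1, hM.2.mono h⟩

lemma insert (hM : H.IsEdgeMatching M) (he : e ∈ H.edgeSet)
    (hfree : ∀ v ∈ e, v ∉ coveredVerts M) : H.IsEdgeMatching (insert e M) := by
  refine ⟨Set.insert_subset he hM.1, hM.2.insert fun f hf _ ↦ ⟨?_, ?_⟩⟩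
  · exact fun v hve hvf ↦ hfree v hve ⟨f, hf, hvf⟩
  · exact fun v hvf hve ↦ hfree v hve ⟨f, hf, hvf⟩

lemma eq_of_mem_of_mem (hM : H.IsEdgeMatching M) (he : e ∈ M) (hf : f ∈ M) (hve : v ∈ e)
    (hvf : v ∈ f) : e = f := by
  by_contra hef
  exact hM.2 he hf hef v hve hvf

lemma ncard_coveredVerts [DecidableEq V] (hM : H.IsEdgeMatching M) (hfin : M.Finite) :
    (coveredVerts M).ncard = 2 * M.ncard := by
  have hcov : coveredVerts M = ↑(hfin.toFinset.biUnion Sym2.toFinset) := by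
    ext v
    simp [coveredVerts]
  rw [hcov, Set.ncard_coe_finset, card_biUnion, sum_const_nat (m := 2),
    Set.ncard_eq_toFinset_card M hfin, mul_comm]
  · exact fun e he ↦ Sym2.card_toFinset_of_not_isDiag e
      (H.not_isDiag_of_mem_edgeSet (hM.1 (hfin.mem_toFinset.1 he)))
  · intro e he f hf hef
    rw [Function.onFun, Finset.disjoint_left]
    simpa only [Sym2.mem_toFinset] using hM.2 (hfin.mem_toFinset.1 he) (hfin.mem_toFinset.1 hf) hef

end IsEdgeMatching

lemma matchNum_eq_sSup (H : SimpleGraph V) :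
    matchNum H = sSup {n | ∃ M, H.IsEdgeMatching M ∧ M.ncard = n} := by
  simp only [matchNum, IsEdgeMatching, and_assoc]

lemma bddAbove_ncard_isEdgeMatching [Finite V] (H : SimpleGraph V) :
    BddAbove {n | ∃ M, H.IsEdgeMatching M ∧ M.ncard = n} :=
  ⟨Nat.card (Sym2 V), by rintro _ ⟨M, -, rfl⟩; exact Set.ncard_le_card M⟩

lemma IsEdgeMatching.ncard_le_matchNum [Finite V] (hM : H.IsEdgeMatching M) :
    M.ncard ≤ matchNum H :=
  H.matchNum_eq_sSup ▸ le_csSup H.bddAbove_ncard_isEdgeMatching ⟨M, hM, rfl⟩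

lemma exists_isMaximumEdgeMatching [Finite V] (H : SimpleGraph V) :
    ∃ M, H.IsMaximumEdgeMatching M := by
  have hne : {n | ∃ M, H.IsEdgeMatching M ∧ M.ncard = n}.Nonempty :=
    ⟨0, ∅, ⟨Set.empty_subset _, Set.pairwise_empty _⟩, Set.ncard_empty _⟩
  obtain ⟨M, hM, hcard⟩ := Nat.sSup_mem hne H.bddAbove_ncard_isEdgeMatching
  exact ⟨M, hM, hcard.trans H.matchNum_eq_sSup.symm⟩

namespace IsMaximumEdgeMatching

variable [Finite V]

lemma mem_coveredVerts_of_adj (hM : H.IsMaximumEdgeMatching M) (hadj : H.Adj u v)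
    (hu : u ∉ coveredVerts M) : v ∈ coveredVerts M := by
  by_contra hv
  have huv : s(u, v) ∉ M := fun h ↦ hu ⟨_, h, Sym2.mem_mk_left u v⟩
  have hfree : ∀ w ∈ s(u, v), w ∉ coveredVerts M := by
    intro w hw
    rcases Sym2.mem_iff.1 hw with rfl | rfl <;> assumption
  have hins := (hM.1.insert (H.mem_edgeSet.2 hadj) hfree).ncard_le_matchNum
  rw [Set.ncard_insert_of_notMem huv M.toFinite, hM.2] at hins
  omega

lemma ncard_compl_coveredVerts_eq [DecidableEq V] (hM : H.IsMaximumEdgeMatching M)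
    (hN : H.IsMaximumEdgeMatching N) :
    (coveredVerts M)ᶜ.ncard = (coveredVerts N)ᶜ.ncard := by
  have hcard : (coveredVerts M).ncard = (coveredVerts N).ncard := by
    rw [hM.1.ncard_coveredVerts M.toFinite, hN.1.ncard_coveredVerts N.toFinite, hM.2, hN.2]
  have hM' := Set.ncard_add_ncard_compl (coveredVerts M)
  have hN' := Set.ncard_add_ncard_compl (coveredVerts N)
  omega

/-- Trade the `N`-edge at the `M`-partner of `x` for the `M`-edge at `x`. -/
lemma exists_ncard_inter_lt (hM : H.IsMaximumEdgeMatching M) (hN : H.IsMaximumEdgeMatching N)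
    (ht : t ∉ coveredVerts N) (hx : x ∉ coveredVerts N) (hxt : x ≠ t) (hxM : x ∈ coveredVerts M) :
    ∃ N', H.IsMaximumEdgeMatching N' ∧ t ∉ coveredVerts N' ∧ (M ∩ N).ncard < (M ∩ N').ncard := by
  obtain ⟨e, heM, hxe⟩ := hxM
  obtain ⟨y, rfl⟩ := Sym2.mem_iff_exists.1 hxe
  have hadj : H.Adj x y := hM.1.1 heM
  obtain ⟨f, hfN, hyf⟩ := hN.mem_coveredVerts_of_adj hadj hx
  have hfM : f ∉ M := fun hfM ↦
    hx ⟨f, hfN, hM.1.eq_of_mem_of_mem heM hfM (Sym2.mem_mk_right x y) hyf ▸ hxe⟩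
  have heN : s(x, y) ∉ N := fun h ↦ hx ⟨_, h, hxe⟩
  have hyt : y ≠ t := fun h ↦ ht (h ▸ ⟨f, hfN, hyf⟩)
  have hfree : ∀ w ∈ s(x, y), w ∉ coveredVerts (N \ {f}) := by
    rintro w hw ⟨g, ⟨hgN, hgf⟩, hwg⟩
    rcases Sym2.mem_iff.1 hw with rfl | rfl
    · exact hx ⟨g, hgN, hwg⟩
    · exact hgf (hN.1.eq_of_mem_of_mem hgN hfN hwg hyf)
  refine ⟨insert s(x, y) (N \ {f}), ⟨(hN.1.subset Set.sdiff_subset).insert hadj hfree, ?_⟩, ?_, ?_⟩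
  · have hpos : 0 < N.ncard := (Set.ncard_pos N.toFinite).2 ⟨f, hfN⟩
    rw [Set.ncard_insert_of_notMem (fun h ↦ heN h.1), Set.ncard_sdiff_singleton_of_mem hfN, ← hN.2]
    omega
  · rintro ⟨g, hg, htg⟩
    rcases hg with rfl | ⟨hgN, -⟩
    · rcases Sym2.mem_iff.1 htg with rfl | rfl
      exacts [hxt rfl, hyt rfl]
    · exact ht ⟨g, hgN, htg⟩
  · refine Set.ncard_lt_ncard ⟨?_, fun h ↦ heN (h ⟨heM, Set.mem_insert _ _⟩).2⟩
    rintro g ⟨hgM, hgN⟩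
    exact ⟨hgM, Or.inr ⟨hgN, fun hgf ↦ hfM (hgf ▸ hgM)⟩⟩

end IsMaximumEdgeMatching

/-- Gallai's lemma. Induct along a walk from `u` to `v`; for its second vertex `t`, choose a maximum
matching `N` missing `t` that shares as many edges with `M` as possible. By the exchange step every
vertex other than `t` missed by `N` is missed by `M`, while `N` covers `u` (a neighbour of `t`) and
`v` (by induction). As `M` and `N` miss equally many vertices, `u = v`. -/
theorem IsMaximumEdgeMatching.eq_of_reachable [Finite V]
    (hall : ∀ t, ∃ N, H.IsMaximumEdgeMatching N ∧ t ∉ coveredVerts N)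
    (hM : H.IsMaximumEdgeMatching M) (hu : u ∉ coveredVerts M) (hv : v ∉ coveredVerts M)
    (huv : H.Reachable u v) : u = v := by
  classical
  obtain ⟨p⟩ := huv
  induction p generalizing M with
  | nil => rfl
  | @cons u t v hadj q ih =>
    by_contra huv
    have htM : t ∈ coveredVerts M := hM.mem_coveredVerts_of_adj hadj hu
    obtain ⟨N, ⟨hN, htN⟩, hopt⟩ := Set.exists_max_image
      {N | H.IsMaximumEdgeMatching N ∧ t ∉ coveredVerts N} (fun N ↦ (M ∩ N).ncard)
      (Set.toFinite _) (hall t)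
    have huN : u ∈ coveredVerts N := hN.mem_coveredVerts_of_adj hadj.symm htN
    have hvN : v ∈ coveredVerts N := by_contra fun hvN ↦ hv (ih hN htN hvN ▸ htM)
    have hsub : (coveredVerts N)ᶜ ⊆ insert t ((coveredVerts M)ᶜ \ {u, v}) := by
      intro x hx
      by_cases hxt : x = t
      · exact Or.inl hxt
      refine Or.inr ⟨fun hxM ↦ ?_, ?_⟩
      · obtain ⟨N', hN', htN', hlt⟩ := hM.exists_ncard_inter_lt hN htN hx hxt hxM
        exact (hopt N' ⟨hN', htN'⟩).not_gt hlt
      · rintro (rfl | rfl)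
        exacts [hx huN, hx hvN]
    have huvM : {u, v} ⊆ (coveredVerts M)ᶜ := Set.insert_subset hu (Set.singleton_subset_iff.2 hv)
    have h1 := Set.ncard_le_ncard hsub
    have h2 := Set.ncard_insert_le t ((coveredVerts M)ᶜ \ {u, v})
    have h3 := Set.ncard_sdiff_add_ncard_of_subset huvM
    rw [Set.ncard_pair huv] at h3
    have h4 := hM.ncard_compl_coveredVerts_eq hN
    omega

lemma matchNum_deleteIncidenceSet_lt [Finite V]
    (ht : ∀ M, H.IsMaximumEdgeMatching M → t ∈ coveredVerts M) :
    matchNum (H.deleteIncidenceSet t) < matchNum H := by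
  obtain ⟨M, hM, hcard⟩ := (H.deleteIncidenceSet t).exists_isMaximumEdgeMatching
  have hMH : H.IsEdgeMatching M := ⟨hM.1.trans (edgeSet_mono (H.deleteIncidenceSet_le t)), hM.2⟩
  have htM : t ∉ coveredVerts M := by
    rintro ⟨e, heM, hte⟩
    have he := hM.1 heM
    rw [edgeSet_deleteIncidenceSet] at he
    exact he.2 ⟨he.1, hte⟩
  rw [← hcard]
  exact hMH.ncard_le_matchNum.lt_of_ne fun h ↦ htM (ht M ⟨hMH, h⟩)

end Matching

section Fractional

variable [Fintype V] [DecidableEq V]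

def IsFractionalMatching (H : SimpleGraph V) [DecidableRel H.Adj] (y : Sym2 V → ℝ) : Prop :=
  (∀ e, 0 ≤ y e) ∧ ∀ v, ∑ e ∈ H.incidenceFinset v, y e ≤ 1

lemma sum_sum_incidenceFinset_eq_two_nsmul {M : Type*} [AddCommMonoid M] (G : SimpleGraph V)
    [DecidableRel G.Adj] (f : Sym2 V → M) :
    ∑ v, ∑ e ∈ G.incidenceFinset v, f e = 2 • ∑ e ∈ G.edgeFinset, f e := by
  simp_rw [incidenceFinset_eq_filter, sum_filter]
  rw [sum_comm, smul_sum]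
  refine sum_congr rfl fun e he ↦ ?_
  rw [← sum_filter, sum_const]
  congr
  convert Sym2.card_toFinset_of_not_isDiag e (G.not_isDiag_of_mem_edgeSet (mem_edgeFinset.1 he))
  ext v
  simp

lemma IsFractionalMatching.anti {H H' : SimpleGraph V} [DecidableRel H.Adj]
    [DecidableRel H'.Adj] {y : Sym2 V → ℝ} (hy : H.IsFractionalMatching y) (h : H' ≤ H) :
    H'.IsFractionalMatching y := by
  refine ⟨hy.1, fun v ↦ le_trans (sum_le_sum_of_subset_of_nonneg ?_ fun e _ _ ↦ hy.1 e) (hy.2 v)⟩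
  intro e
  simp only [mem_incidenceFinset, incidenceSet]
  exact fun ⟨he, hve⟩ ↦ ⟨edgeSet_mono h he, hve⟩

lemma degree_lt_card_connectedComponent (G : SimpleGraph V) [DecidableRel G.Adj]
    [DecidableEq G.ConnectedComponent] (v : V) :
    G.degree v < #{w | G.connectedComponentMk w = G.connectedComponentMk v} := by
  rw [← card_neighborFinset_eq_degree, Nat.lt_iff_add_one_le,
    ← card_insert_of_notMem (G.notMem_neighborFinset_self v)]
  refine card_le_card fun w hw ↦ ?_
  rcases mem_insert.1 hw with rfl | hw
  · simp
  · simpa using (ConnectedComponent.connectedComponentMk_eq_of_adj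
      ((G.mem_neighborFinset v w).1 hw)).symm

variable {H : SimpleGraph V} [DecidableRel H.Adj] {y : Sym2 V → ℝ} {ε : ℝ}

lemma sum_incidenceFinset_le_mul_degree (hyε : ∀ e ∈ H.edgeSet, y e ≤ ε) (v : V) :
    ∑ e ∈ H.incidenceFinset v, y e ≤ ε * H.degree v := by
  calc ∑ e ∈ H.incidenceFinset v, y e ≤ ∑ e ∈ H.incidenceFinset v, ε :=
        sum_le_sum fun e he ↦ hyε e ((H.mem_incidenceFinset v e).1 he).1
    _ = ε * H.degree v := by
        rw [sum_const, card_incidenceFinset_eq_degree, nsmul_eq_mul, mul_comm]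

lemma IsFractionalMatching.sum_le_of_forall_exists_notMem (hy : H.IsFractionalMatching y)
    (hε : 0 ≤ ε) (hyε : ∀ e ∈ H.edgeSet, y e ≤ ε)
    (hall : ∀ t, ∃ N, H.IsMaximumEdgeMatching N ∧ t ∉ coveredVerts N) :
    ∑ e ∈ H.edgeFinset, y e ≤ (1 + ε) * matchNum H := by
  classical
  obtain ⟨M, hM⟩ := H.exists_isMaximumEdgeMatching
  have hcomp : ∀ c : H.ConnectedComponent,
      ∑ v with H.connectedComponentMk v = c, ∑ e ∈ H.incidenceFinset v, y e ≤
        (1 + ε) * #{v | H.connectedComponentMk v = c ∧ v ∈ coveredVerts M} := by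
    intro c
    refine sum_le_one_add_mul_of_card_le hε (fun v _ ↦ hy.2 v) (fun v hv ↦ ?_) ?_
    · refine (sum_incidenceFinset_le_mul_degree hyε v).trans (mul_le_mul_of_nonneg_left ?_ hε)
      have hdeg := H.degree_lt_card_connectedComponent v
      rw [(mem_filter.1 hv).2] at hdeg
      rw [le_sub_iff_add_le]
      exact_mod_cast hdeg
    · have hmiss : #{v | H.connectedComponentMk v = c ∧ v ∉ coveredVerts M} ≤ 1 := by
        refine card_le_one.2 fun a ha b hb ↦ ?_
        simp only [mem_filter, mem_univ, true_and] at ha hb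
        exact hM.eq_of_reachable hall ha.2 hb.2 (ConnectedComponent.exact (ha.1.trans hb.1.symm))
      have hsplit := card_filter_add_card_filter_not (s := {v | H.connectedComponentMk v = c})
        (· ∈ coveredVerts M)
      simp only [filter_filter] at hsplit
      omega
  have hcov : #{v | v ∈ coveredVerts M} = 2 * matchNum H := by
    rw [← hM.2, ← hM.1.ncard_coveredVerts M.toFinite, Set.ncard_eq_toFinset_card']
    congr 1
    ext v
    simp
  suffices 2 * ∑ e ∈ H.edgeFinset, y e ≤ 2 * ((1 + ε) * matchNum H) by linarith
  calc 2 * ∑ e ∈ H.edgeFinset, y e = ∑ v, ∑ e ∈ H.incidenceFinset v, y e := by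
        rw [sum_sum_incidenceFinset_eq_two_nsmul, two_nsmul, two_mul]
    _ = ∑ c, ∑ v with H.connectedComponentMk v = c, ∑ e ∈ H.incidenceFinset v, y e :=
        (sum_fiberwise _ _ _).symm
    _ ≤ ∑ c, (1 + ε) * #{v | H.connectedComponentMk v = c ∧ v ∈ coveredVerts M} :=
        sum_le_sum fun c _ ↦ hcomp c
    _ = 2 * ((1 + ε) * matchNum H) := by
        rw [card_eq_sum_card_fiberwise (t := univ) (f := H.connectedComponentMk)
          fun _ _ ↦ mem_univ _] at hcov
        simp only [filter_filter, and_comm] at hcov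
        rw [← mul_sum, ← Nat.cast_sum, hcov]
        push_cast
        ring

theorem IsFractionalMatching.sum_edgeFinset_le (hy : H.IsFractionalMatching y) (hε : 0 ≤ ε)
    (hyε : ∀ e ∈ H.edgeSet, y e ≤ ε) : ∑ e ∈ H.edgeFinset, y e ≤ (1 + ε) * matchNum H := by
  induction h : #H.edgeFinset using Nat.strong_induction_on generalizing H with
  | _ n ih =>
  by_cases hall : ∀ t, ∃ N, H.IsMaximumEdgeMatching N ∧ t ∉ coveredVerts N
  · exact hy.sum_le_of_forall_exists_notMem hε hyε hall
  push Not at hall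
  obtain ⟨t, ht⟩ := hall
  obtain ⟨M, hM⟩ := H.exists_isMaximumEdgeMatching
  obtain ⟨e, heM, hte⟩ := ht M hM
  have hinc : (H.incidenceFinset t).Nonempty := ⟨e, (H.mem_incidenceFinset t e).2 ⟨hM.1.1 heM, hte⟩⟩
  have hH' := deleteIncidenceSet_le H t
  have hlt : #(H.deleteIncidenceSet t).edgeFinset < n := by
    rw [← h, edgeFinset_deleteIncidenceSet_eq_sdiff]
    exact card_lt_card (sdiff_ssubset (H.incidenceFinset_subset t) hinc)
  have hIH := ih _ hlt (hy.anti hH') (fun e he ↦ hyε e (edgeSet_mono hH' he)) rfl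
  have hν : (matchNum (H.deleteIncidenceSet t) : ℝ) + 1 ≤ matchNum H := by
    exact_mod_cast matchNum_deleteIncidenceSet_lt ht
  rw [← sum_sdiff (H.incidenceFinset_subset t), ← edgeFinset_deleteIncidenceSet_eq_sdiff]
  nlinarith [hy.2 t]

end Fractional

end SimpleGraph

theorem stmt_4_general {V : Type*} [Fintype V] [DecidableEq V] (G : SimpleGraph V)
    [DecidableRel G.Adj] (ε : ℝ) (hε : 0 ≤ ε) (y : Sym2 V → ℝ)
    (hy0 : ∀ e, 0 ≤ y e)
    (hdeg : ∀ v : V, ∑ e ∈ G.incidenceFinset v, y e ≤ 1)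
    (hε' : ∀ e ∈ G.edgeSet, y e ≤ ε) :
    ∑ e ∈ G.edgeFinset, y e ≤ (1 + ε) * (matchNum G : ℝ) :=
  SimpleGraph.IsFractionalMatching.sum_edgeFinset_le ⟨hy0, hdeg⟩ hε hε'

/-- If `y` is a fractional matching of `G` (nonnegative edge weights, supported
on the edges, with total weight at most `1` at each vertex) in which every edge
weight is at most `ε`, then the total weight is at most `(1+ε)·ν(G)`. -/
theorem stmt_4 {V : Type*} [Fintype V] [DecidableEq V] (G : SimpleGraph V)
    [DecidableRel G.Adj] (ε : ℝ) (hε : 0 ≤ ε) (y : Sym2 V → ℝ)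
    (hy0 : ∀ e, 0 ≤ y e)
    (hsupp : ∀ e ∉ G.edgeSet, y e = 0)
    (hdeg : ∀ v : V, ∑ e ∈ G.incidenceFinset v, y e ≤ 1)
    (hε' : ∀ e ∈ G.edgeSet, y e ≤ ε) :
    ∑ e ∈ G.edgeFinset, y e ≤ (1 + ε) * (matchNum G : ℝ) :=
  stmt_4_general G ε hε y hy0 hdeg hε'
end
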